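/- Let L be a simple line arrangement of n ≥ 3 lines and let v be any vertex of its arrangement graph G_L. Then the induced subgraph of G_L on V(L) \ {v} is not isomorphic to the arrangement graph of any simple line arrangement. -/

import Mathlib

/-- A line in the Euclidean plane `ℝ × ℝ`, given by an affine equation. -/
def IsLine (l : Set (ℝ × ℝ)) : Prop :=
  ∃ a b c : ℝ, (a, b) ≠ (0, 0) ∧ l = {p : ℝ × ℝ | a * p.1 + b * p.2 = c}

/-- A simple line arrangement of `n` lines in the Euclidean plane: `n` distinct lines,
every two of which meet in exactly one point, and no point lies on three of the lines. -/
structure SimpleLineArrangement (n : ℕ) where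
  lines : Finset (Set (ℝ × ℝ))
  card_lines : lines.card = n
  isLine : ∀ l ∈ lines, IsLine l
  meet : ∀ l₁ ∈ lines, ∀ l₂ ∈ lines, l₁ ≠ l₂ → ∃! p : ℝ × ℝ, p ∈ l₁ ∩ l₂
  simple : ∀ p : ℝ × ℝ, ∀ l₁ ∈ lines, ∀ l₂ ∈ lines, ∀ l₃ ∈ lines,
    p ∈ l₁ → p ∈ l₂ → p ∈ l₃ → l₁ = l₂ ∨ l₁ = l₃ ∨ l₂ = l₃

namespace SimpleLineArrangement

variable {n : ℕ}

/-- The vertex set of the arrangement: all intersection points of pairs of lines. -/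
def verts (A : SimpleLineArrangement n) : Set (ℝ × ℝ) :=
  {p | ∃ l₁ ∈ A.lines, ∃ l₂ ∈ A.lines, l₁ ≠ l₂ ∧ p ∈ l₁ ∧ p ∈ l₂}

/-- The arrangement graph: two distinct vertices are adjacent iff some line of the
arrangement contains both and no other vertex lies strictly between them on that line. -/
def graph (A : SimpleLineArrangement n) : SimpleGraph (ℝ × ℝ) where
  Adj u v := u ≠ v ∧ u ∈ A.verts ∧ v ∈ A.verts ∧
    ∃ l ∈ A.lines, u ∈ l ∧ v ∈ l ∧ ∀ w ∈ A.verts, w ∈ l → ¬ Sbtw ℝ u w v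
  symm := by
    constructor; rintro u v ⟨huv, hu, hv, l, hl, hul, hvl, hbet⟩
    exact ⟨huv.symm, hv, hu, l, hl, hvl, hul, fun w hw hwl hb => hbet w hw hwl hb.symm⟩
  loopless := by constructor; rintro u ⟨h, -⟩; exact h rfl

/-- The degree of a vertex in the arrangement graph. -/
noncomputable def deg (A : SimpleLineArrangement n) (v : ℝ × ℝ) : ℕ :=
  {w | A.graph.Adj v w}.ncard

/-- The number of vertices of the arrangement graph having degree `i`. -/
noncomputable def degCount (A : SimpleLineArrangement n) (i : ℕ) : ℕ :=
  {v | v ∈ A.verts ∧ A.deg v = i}.ncard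

/-- The eccentricity of a vertex: the maximum graph distance to a vertex. -/
noncomputable def ecc (A : SimpleLineArrangement n) (u : ℝ × ℝ) : ℕ :=
  sSup ((fun v => A.graph.dist u v) '' A.verts)

/-- The realization `R(L)`: the union of the closed segments joining adjacent vertices. -/
def realization (A : SimpleLineArrangement n) : Set (ℝ × ℝ) :=
  ⋃ (u : ℝ × ℝ) (v : ℝ × ℝ) (_ : A.graph.Adj u v), segment ℝ u v

/-- A point lies on the outer face of the realization if it belongs to the closure of
the unbounded connected component of the complement of the realization. -/
def OnOuterFace (A : SimpleLineArrangement n) (p : ℝ × ℝ) : Prop :=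
  ∃ q : ℝ × ℝ, q ∉ A.realization ∧
    ¬ Bornology.IsBounded (connectedComponentIn (A.realization)ᶜ q) ∧
    p ∈ closure (connectedComponentIn (A.realization)ᶜ q)

end SimpleLineArrangement

/-!
A simple arrangement of `n` lines has exactly `n.choose 2` vertices, since each vertex lies
on exactly two lines and each pair of lines meets in exactly one vertex. Deleting a vertex
leaves `n.choose 2 - 1` vertices, and this is never a binomial coefficient `m.choose 2` with
`m ≥ 2`: consecutive values `m.choose 2 < (m + 1).choose 2` differ by `m ≥ 2`.
-/

theorem Nat.choose_two_add_one_ne {m n : ℕ} (hm : 2 ≤ m) : m.choose 2 + 1 ≠ n.choose 2 := by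
  intro h
  rcases le_or_gt n m with hnm | hmn
  · have := Nat.choose_le_choose 2 hnm
    omega
  · have hsucc : (m + 1).choose 2 = m.choose 1 + m.choose 2 := Nat.choose_succ_succ m 1
    have := Nat.choose_le_choose 2 (show m + 1 ≤ n from hmn)
    rw [Nat.choose_one_right] at hsucc
    omega

namespace SimpleLineArrangement

variable {n : ℕ} (A : SimpleLineArrangement n)

open scoped Classical in
noncomputable def linesThrough (p : ℝ × ℝ) : Finset (Set (ℝ × ℝ)) :=
  A.lines.filter (p ∈ ·)

theorem mem_linesThrough {p : ℝ × ℝ} {l : Set (ℝ × ℝ)} :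
    l ∈ A.linesThrough p ↔ l ∈ A.lines ∧ p ∈ l := by
  simp [linesThrough]

variable {A}

theorem linesThrough_eq_pair {p : ℝ × ℝ} {l₁ l₂ : Set (ℝ × ℝ)} (h₁ : l₁ ∈ A.lines)
    (h₂ : l₂ ∈ A.lines) (hne : l₁ ≠ l₂) (hp₁ : p ∈ l₁) (hp₂ : p ∈ l₂) :
    A.linesThrough p = {l₁, l₂} := by
  ext l
  rw [mem_linesThrough, Finset.mem_insert, Finset.mem_singleton]
  constructor
  · rintro ⟨hl, hpl⟩
    rcases A.simple p l hl l₁ h₁ l₂ h₂ hpl hp₁ hp₂ with h | h | h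
    exacts [Or.inl h, Or.inr h, absurd h hne]
  · rintro (rfl | rfl)
    exacts [⟨h₁, hp₁⟩, ⟨h₂, hp₂⟩]

theorem eq_of_mem_inter {p q : ℝ × ℝ} {l₁ l₂ : Set (ℝ × ℝ)} (h₁ : l₁ ∈ A.lines)
    (h₂ : l₂ ∈ A.lines) (hne : l₁ ≠ l₂) (hp : p ∈ l₁ ∩ l₂) (hq : q ∈ l₁ ∩ l₂) : p = q :=
  (A.meet l₁ h₁ l₂ h₂ hne).unique hp hq

variable (A)

theorem bijOn_linesThrough :
    Set.BijOn A.linesThrough A.verts (A.lines.powersetCard 2 : Set (Finset (Set (ℝ × ℝ)))) := by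
  refine ⟨?maps, ?inj, ?surj⟩
  case maps =>
    rintro p ⟨l₁, h₁, l₂, h₂, hne, hp₁, hp₂⟩
    rw [Finset.mem_coe, Finset.mem_powersetCard, linesThrough_eq_pair h₁ h₂ hne hp₁ hp₂]
    exact ⟨Finset.insert_subset h₁ (Finset.singleton_subset_iff.mpr h₂), Finset.card_pair hne⟩
  case inj =>
    rintro p ⟨l₁, h₁, l₂, h₂, hne, hp₁, hp₂⟩ q - hpq
    rw [linesThrough_eq_pair h₁ h₂ hne hp₁ hp₂, Finset.ext_iff] at hpq
    have hq₁ := (A.mem_linesThrough.1 ((hpq l₁).1 (by simp))).2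
    have hq₂ := (A.mem_linesThrough.1 ((hpq l₂).1 (by simp))).2
    exact eq_of_mem_inter h₁ h₂ hne ⟨hp₁, hp₂⟩ ⟨hq₁, hq₂⟩
  case surj =>
    intro s hs
    rw [Finset.mem_coe, Finset.mem_powersetCard] at hs
    obtain ⟨hsub, hcard⟩ := hs
    obtain ⟨l₁, l₂, hne, rfl⟩ := Finset.card_eq_two.mp hcard
    have h₁ : l₁ ∈ A.lines := hsub (by simp)
    have h₂ : l₂ ∈ A.lines := hsub (by simp)
    obtain ⟨p, ⟨hp₁, hp₂⟩, -⟩ := A.meet l₁ h₁ l₂ h₂ hne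
    exact ⟨p, ⟨l₁, h₁, l₂, h₂, hne, hp₁, hp₂⟩, linesThrough_eq_pair h₁ h₂ hne hp₁ hp₂⟩

theorem verts_finite : A.verts.Finite :=
  A.bijOn_linesThrough.finite_iff_finite.2 (Finset.finite_toSet _)

theorem ncard_verts : A.verts.ncard = n.choose 2 := by
  rw [← A.bijOn_linesThrough.injOn.ncard_image, A.bijOn_linesThrough.image_eq,
    Set.ncard_coe_finset, Finset.card_powersetCard, A.card_lines]

end SimpleLineArrangement

theorem vertex_deleted_not_arrangement_graph_general (n : ℕ)
    (A : SimpleLineArrangement n) (v : ℝ × ℝ) (hv : v ∈ A.verts) :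
    ¬ ∃ (m : ℕ) (_ : 3 ≤ m) (B : SimpleLineArrangement m),
        Nonempty ((A.graph.induce (A.verts \ {v})) ≃g (B.graph.induce B.verts)) := by
  rintro ⟨m, hm, B, ⟨e⟩⟩
  have hcard : (A.verts \ {v}).ncard = B.verts.ncard := Nat.card_congr e.toEquiv
  have hdel : (A.verts \ {v}).ncard + 1 = A.verts.ncard :=
    Set.ncard_sdiff_singleton_add_one hv A.verts_finite
  rw [hcard, B.ncard_verts, A.ncard_verts] at hdel
  exact Nat.choose_two_add_one_ne (by omega) hdel

theorem vertex_deleted_not_arrangement_graph (n : ℕ) (hn : 3 ≤ n)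
    (A : SimpleLineArrangement n) (v : ℝ × ℝ) (hv : v ∈ A.verts) :
    ¬ ∃ (m : ℕ) (_ : 3 ≤ m) (B : SimpleLineArrangement m),
        Nonempty ((A.graph.induce (A.verts \ {v})) ≃g (B.graph.induce B.verts)) :=
  vertex_deleted_not_arrangement_graph_general n A v hv
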